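/- Let C be a coalgebra, H a Hopf algebra with a coflat Hopf coaction δ on C. The set Γ(C ↻ H) of H-equivariant cocharacters (convolution invertible φ ∈ Hom(C,H) with ε_H ∘ φ = ε_C, satisfying the coaction condition Δ_H(φ(c)) = φ(c_{(1)}^{(0)}) ⊗ c_{(1)}^{(1)} φ(c_{(2)}) and the comodule condition c_{(1)}^{(0)} ⊗ c_{(1)}^{(1)} φ(c_{(2)}) = c_{(2)}^{(0)} ⊗ φ(c_{(1)}) c_{(2)}^{(1)}) is closed under convolution product: if φ, ψ ∈ Γ(C ↻ H) then φ ⋆ ψ ∈ Γ(C ↻ H). -/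
import Mathlib


open TensorProduct LinearMap Coalgebra

/-- A coflat Hopf coaction of a Hopf algebra `H` on a coalgebra `C`. -/
structure IsCoflatCoaction (R C H : Type) [CommRing R]
    [AddCommGroup C] [Module R C] [Coalgebra R C]
    [Ring H] [HopfAlgebra R H]
    (δ : C →ₗ[R] C ⊗[R] H) : Prop where
  coassoc : (TensorProduct.assoc R C H H).toLinearMap ∘ₗ
      (TensorProduct.map δ (LinearMap.id : H →ₗ[R] H)) ∘ₗ δ
      = (TensorProduct.map (LinearMap.id : C →ₗ[R] C) (Coalgebra.comul (R := R))) ∘ₗ δ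
  counitary : (TensorProduct.rid R C).toLinearMap ∘ₗ
      (TensorProduct.map (LinearMap.id : C →ₗ[R] C) (Coalgebra.counit (R := R))) ∘ₗ δ
      = LinearMap.id
  coflat_mul : (TensorProduct.map (LinearMap.id : (C ⊗[R] C) →ₗ[R] C ⊗[R] C)
        (LinearMap.mul' R H)) ∘ₗ
      (TensorProduct.tensorTensorTensorComm R C H C H).toLinearMap ∘ₗ
      (TensorProduct.map δ δ) ∘ₗ Coalgebra.comul
      = (TensorProduct.map (Coalgebra.comul (R := R)) (LinearMap.id : H →ₗ[R] H)) ∘ₗ δ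
  coflat_counit : (LinearMap.mul' R R) ∘ₗ
      (TensorProduct.map (Coalgebra.counit (R := R)) (Coalgebra.counit (R := R))) ∘ₗ δ
      = Coalgebra.counit

section Cocharacters

variable (R C H : Type) [CommRing R] [AddCommGroup C] [Module R C] [Coalgebra R C]
  [Ring H] [HopfAlgebra R H]

/-- The convolution product on `Hom(C,H)`: `(φ ⋆ ψ)(c) = φ(c₍₁₎) ψ(c₍₂₎)`. -/
noncomputable def conv (φ ψ : C →ₗ[R] H) : C →ₗ[R] H :=
  (LinearMap.mul' R H) ∘ₗ (TensorProduct.map φ ψ) ∘ₗ Coalgebra.comul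

/-- The convolution unit `c ↦ ε(c) 1`. -/
noncomputable def convOne : C →ₗ[R] H :=
  (Algebra.linearMap R H) ∘ₗ Coalgebra.counit

variable (δ : C →ₗ[R] C ⊗[R] H)

/-- `c ↦ φ(c₍₁₎⁽⁰⁾) ⊗ c₍₁₎⁽¹⁾ ψ(c₍₂₎)` as a linear map `C → H ⊗ H`. -/
noncomputable def coactTerm (φ ψ : C →ₗ[R] H) : C →ₗ[R] H ⊗[R] H :=
  (TensorProduct.map (LinearMap.id : H →ₗ[R] H) (LinearMap.mul' R H)) ∘ₗ
    (TensorProduct.assoc R H H H).toLinearMap ∘ₗ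
    (TensorProduct.map (TensorProduct.map φ (LinearMap.id : H →ₗ[R] H)) ψ) ∘ₗ
    (TensorProduct.map δ (LinearMap.id : C →ₗ[R] C)) ∘ₗ Coalgebra.comul

/-- `c ↦ c₍₁₎⁽⁰⁾ ⊗ c₍₁₎⁽¹⁾ φ(c₍₂₎)` as a linear map `C → C ⊗ H`. -/
noncomputable def comodCondLHS (φ : C →ₗ[R] H) : C →ₗ[R] C ⊗[R] H :=
  (TensorProduct.map (LinearMap.id : C →ₗ[R] C) (LinearMap.mul' R H)) ∘ₗ
    (TensorProduct.assoc R C H H).toLinearMap ∘ₗ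
    (TensorProduct.map δ φ) ∘ₗ Coalgebra.comul

/-- `c ↦ c₍₂₎⁽⁰⁾ ⊗ φ(c₍₁₎) c₍₂₎⁽¹⁾` as a linear map `C → C ⊗ H`. -/
noncomputable def comodCondRHS (φ : C →ₗ[R] H) : C →ₗ[R] C ⊗[R] H :=
  (TensorProduct.map (LinearMap.id : C →ₗ[R] C) (LinearMap.mul' R H)) ∘ₗ
    (TensorProduct.assoc R C H H).toLinearMap ∘ₗ
    (TensorProduct.map ((TensorProduct.comm R H C).toLinearMap)
      (LinearMap.id : H →ₗ[R] H)) ∘ₗ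
    (TensorProduct.assoc R H C H).symm.toLinearMap ∘ₗ
    (TensorProduct.map φ δ) ∘ₗ Coalgebra.comul

/-- An `H`-equivariant cocharacter: convolution invertible, counitary, satisfying the
coaction condition and the comodule condition. -/
structure IsCocharacter (φ : C →ₗ[R] H) : Prop where
  invertible : ∃ ψ : C →ₗ[R] H, conv R C H φ ψ = convOne R C H ∧ conv R C H ψ φ = convOne R C H
  counitary : (Coalgebra.counit (R := R)) ∘ₗ φ = Coalgebra.counit
  coaction : (Coalgebra.comul (R := R)) ∘ₗ φ = coactTerm R C H δ φ φ
  comodule : comodCondLHS R C H δ φ = comodCondRHS R C H δ φ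

end Cocharacters


section ConvAux

variable {R C H : Type} [CommRing R] [AddCommGroup C] [Module R C] [Coalgebra R C]
  [Ring H] [HopfAlgebra R H]
variable {A B : Type} [Ring A] [Algebra R A] [Ring B] [Algebra R B]

/-- Convolution into an arbitrary algebra. -/
noncomputable def conv' (f g : C →ₗ[R] A) : C →ₗ[R] A :=
  ((LinearMap.mul' R A) ∘ₗ (TensorProduct.map f g)) ∘ₗ Coalgebra.comul

lemma coassoc_ext {X : Type} [AddCommGroup X] [Module R X]
    (F : (C ⊗[R] C) ⊗[R] C →ₗ[R] X) (G : C ⊗[R] (C ⊗[R] C) →ₗ[R] X)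
    (h : ∀ x y z : C, G (x ⊗ₜ[R] (y ⊗ₜ[R] z)) = F ((x ⊗ₜ[R] y) ⊗ₜ[R] z)) :
    F ∘ₗ (TensorProduct.map Coalgebra.comul LinearMap.id) ∘ₗ Coalgebra.comul
      = G ∘ₗ (TensorProduct.map LinearMap.id Coalgebra.comul) ∘ₗ Coalgebra.comul := by
  have hFG : G ∘ₗ (TensorProduct.assoc R C C C).toLinearMap = F :=
    TensorProduct.ext_threefold fun x y z => by simp [h x y z]
  have h2 : (TensorProduct.map Coalgebra.comul LinearMap.id :
      C ⊗[R] C →ₗ[R] (C ⊗[R] C) ⊗[R] C) = rTensor C (Coalgebra.comul (R := R)) := rfl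
  have h3 : (TensorProduct.map LinearMap.id Coalgebra.comul :
      C ⊗[R] C →ₗ[R] C ⊗[R] (C ⊗[R] C)) = lTensor C (Coalgebra.comul (R := R)) := rfl
  rw [h2, h3, ← Coalgebra.coassoc, ← hFG]
  rfl

lemma factor_l {M N : Type} [AddCommGroup M] [Module R M] [AddCommGroup N] [Module R N]
    (K : C ⊗[R] C →ₗ[R] M) (h : C →ₗ[R] N) :
    TensorProduct.map (K ∘ₗ Coalgebra.comul) h
      = TensorProduct.map K h ∘ₗ TensorProduct.map Coalgebra.comul LinearMap.id := by
  rw [← TensorProduct.map_comp, LinearMap.comp_id]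

lemma factor_r {M N : Type} [AddCommGroup M] [Module R M] [AddCommGroup N] [Module R N]
    (K : C ⊗[R] C →ₗ[R] M) (h : C →ₗ[R] N) :
    TensorProduct.map h (K ∘ₗ Coalgebra.comul)
      = TensorProduct.map h K ∘ₗ TensorProduct.map LinearMap.id Coalgebra.comul := by
  rw [← TensorProduct.map_comp, LinearMap.comp_id]

lemma conv'_assoc (f g h : C →ₗ[R] A) :
    conv' (conv' f g) h = conv' f (conv' g h) := by
  unfold conv'
  rw [factor_l, factor_r]
  have key := coassoc_ext (R := R) (C := C)
    ((LinearMap.mul' R A) ∘ₗ TensorProduct.map ((LinearMap.mul' R A) ∘ₗ TensorProduct.map f g) h)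
    ((LinearMap.mul' R A) ∘ₗ TensorProduct.map f ((LinearMap.mul' R A) ∘ₗ TensorProduct.map g h))
    (fun x y z => by simp [mul_assoc])
  exact key

/-- Convolution unit into an arbitrary algebra. -/
noncomputable def convOne' : C →ₗ[R] A := (Algebra.linearMap R A) ∘ₗ Coalgebra.counit

lemma one_conv' (f : C →ₗ[R] A) : conv' (convOne' (R := R)) f = f := by
  unfold conv' convOne'
  rw [show TensorProduct.map ((Algebra.linearMap R A) ∘ₗ Coalgebra.counit) f
      = TensorProduct.map (Algebra.linearMap R A) f
          ∘ₗ TensorProduct.map Coalgebra.counit LinearMap.id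
      from by rw [← TensorProduct.map_comp, LinearMap.comp_id]]
  calc (LinearMap.mul' R A ∘ₗ TensorProduct.map (Algebra.linearMap R A) f
          ∘ₗ TensorProduct.map Coalgebra.counit LinearMap.id) ∘ₗ Coalgebra.comul
      = (LinearMap.mul' R A ∘ₗ TensorProduct.map (Algebra.linearMap R A) f)
          ∘ₗ rTensor C (Coalgebra.counit (R := R)) ∘ₗ Coalgebra.comul := rfl
    _ = (LinearMap.mul' R A ∘ₗ TensorProduct.map (Algebra.linearMap R A) f)
          ∘ₗ (TensorProduct.mk R R C) 1 := by rw [Coalgebra.rTensor_counit_comp_comul]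
    _ = f := by ext c; simp

lemma conv'_one (f : C →ₗ[R] A) : conv' f (convOne' (R := R)) = f := by
  unfold conv' convOne'
  rw [show TensorProduct.map f ((Algebra.linearMap R A) ∘ₗ Coalgebra.counit)
      = TensorProduct.map f (Algebra.linearMap R A)
          ∘ₗ TensorProduct.map LinearMap.id Coalgebra.counit
      from by rw [← TensorProduct.map_comp, LinearMap.comp_id]]
  calc (LinearMap.mul' R A ∘ₗ TensorProduct.map f (Algebra.linearMap R A)
          ∘ₗ TensorProduct.map LinearMap.id Coalgebra.counit) ∘ₗ Coalgebra.comul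
      = (LinearMap.mul' R A ∘ₗ TensorProduct.map f (Algebra.linearMap R A))
          ∘ₗ lTensor C (Coalgebra.counit (R := R)) ∘ₗ Coalgebra.comul := rfl
    _ = (LinearMap.mul' R A ∘ₗ TensorProduct.map f (Algebra.linearMap R A))
          ∘ₗ (TensorProduct.mk R C R).flip 1 := by rw [Coalgebra.lTensor_counit_comp_comul]
    _ = f := by ext c; simp

lemma algHom_conv' (α : A →ₐ[R] B) (f g : C →ₗ[R] A) :
    α.toLinearMap ∘ₗ conv' f g = conv' (α.toLinearMap ∘ₗ f) (α.toLinearMap ∘ₗ g) := by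
  unfold conv'
  rw [TensorProduct.map_comp]
  rw [show α.toLinearMap ∘ₗ (LinearMap.mul' R A ∘ₗ TensorProduct.map f g) ∘ₗ Coalgebra.comul
      = (α.toLinearMap ∘ₗ LinearMap.mul' R A) ∘ₗ TensorProduct.map f g ∘ₗ Coalgebra.comul
      from rfl]
  rw [show (α.toLinearMap ∘ₗ LinearMap.mul' R A : A ⊗[R] A →ₗ[R] B)
      = LinearMap.mul' R B ∘ₗ TensorProduct.map α.toLinearMap α.toLinearMap from
      TensorProduct.ext' fun a b => by simp]
  rfl

end ConvAux


section DeltaAux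

variable {R C H : Type} [CommRing R] [AddCommGroup C] [Module R C] [Coalgebra R C]
  [Ring H] [HopfAlgebra R H]
variable (δ : C →ₗ[R] C ⊗[R] H)

/-- `h ↦ 1 ⊗ h` as a linear map. -/
noncomputable def iota2 : H →ₗ[R] H ⊗[R] H :=
  (Algebra.TensorProduct.includeRight (R := R) (A := H) (B := H)).toLinearMap

lemma coactTerm_eq_conv' (f g : C →ₗ[R] H) :
    coactTerm R C H δ f g
      = conv' (TensorProduct.map f LinearMap.id ∘ₗ δ) (iota2 ∘ₗ g) := by
  unfold coactTerm conv' iota2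
  have e : TensorProduct.map (TensorProduct.map f LinearMap.id ∘ₗ δ)
        ((Algebra.TensorProduct.includeRight (R := R) (A := H) (B := H)).toLinearMap ∘ₗ g)
      = TensorProduct.map LinearMap.id
            (Algebra.TensorProduct.includeRight (R := R) (A := H) (B := H)).toLinearMap
          ∘ₗ TensorProduct.map (TensorProduct.map f LinearMap.id) g
          ∘ₗ TensorProduct.map δ LinearMap.id := by
    simp only [← TensorProduct.map_comp, LinearMap.comp_id, LinearMap.id_comp]
  rw [e]
  have key : (TensorProduct.map (LinearMap.id : H →ₗ[R] H) (LinearMap.mul' R H))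
        ∘ₗ (TensorProduct.assoc R H H H).toLinearMap
      = LinearMap.mul' R (H ⊗[R] H) ∘ₗ TensorProduct.map LinearMap.id
          (Algebra.TensorProduct.includeRight (R := R) (A := H) (B := H)).toLinearMap :=
    TensorProduct.ext_threefold fun x y z => by
      simp [Algebra.TensorProduct.tmul_mul_tmul]
  exact congrArg (· ∘ₗ (TensorProduct.map (TensorProduct.map f LinearMap.id) g
    ∘ₗ TensorProduct.map δ LinearMap.id ∘ₗ Coalgebra.comul)) key

lemma beta_conv' (hδ : IsCoflatCoaction R C H δ) (φ ψ : C →ₗ[R] H) :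
    conv' (TensorProduct.map φ LinearMap.id ∘ₗ δ) (TensorProduct.map ψ LinearMap.id ∘ₗ δ)
      = TensorProduct.map (conv' φ ψ) LinearMap.id ∘ₗ δ := by
  have key : LinearMap.mul' R (H ⊗[R] H)
        ∘ₗ TensorProduct.map (TensorProduct.map φ LinearMap.id) (TensorProduct.map ψ LinearMap.id)
      = (TensorProduct.map (LinearMap.mul' R H ∘ₗ TensorProduct.map φ ψ)
            (LinearMap.id : H →ₗ[R] H))
          ∘ₗ (TensorProduct.map (LinearMap.id : (C ⊗[R] C) →ₗ[R] C ⊗[R] C) (LinearMap.mul' R H))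
          ∘ₗ (TensorProduct.tensorTensorTensorComm R C H C H).toLinearMap :=
    TensorProduct.ext_fourfold' fun c h c' h' => by
      simp [Algebra.TensorProduct.tmul_mul_tmul]
  calc conv' (TensorProduct.map φ LinearMap.id ∘ₗ δ) (TensorProduct.map ψ LinearMap.id ∘ₗ δ)
      = (LinearMap.mul' R (H ⊗[R] H)
          ∘ₗ TensorProduct.map (TensorProduct.map φ LinearMap.id)
              (TensorProduct.map ψ LinearMap.id))
          ∘ₗ (TensorProduct.map δ δ ∘ₗ Coalgebra.comul) := by
        unfold conv'
        rw [TensorProduct.map_comp]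
        rfl
    _ = ((TensorProduct.map (LinearMap.mul' R H ∘ₗ TensorProduct.map φ ψ)
            (LinearMap.id : H →ₗ[R] H))
          ∘ₗ (TensorProduct.map (LinearMap.id : (C ⊗[R] C) →ₗ[R] C ⊗[R] C) (LinearMap.mul' R H))
          ∘ₗ (TensorProduct.tensorTensorTensorComm R C H C H).toLinearMap)
          ∘ₗ (TensorProduct.map δ δ ∘ₗ Coalgebra.comul) := by rw [key]
    _ = (TensorProduct.map (LinearMap.mul' R H ∘ₗ TensorProduct.map φ ψ)
            (LinearMap.id : H →ₗ[R] H))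
          ∘ₗ ((TensorProduct.map (LinearMap.id : (C ⊗[R] C) →ₗ[R] C ⊗[R] C) (LinearMap.mul' R H))
          ∘ₗ (TensorProduct.tensorTensorTensorComm R C H C H).toLinearMap
          ∘ₗ (TensorProduct.map δ δ) ∘ₗ Coalgebra.comul) := rfl
    _ = (TensorProduct.map (LinearMap.mul' R H ∘ₗ TensorProduct.map φ ψ)
            (LinearMap.id : H →ₗ[R] H))
          ∘ₗ ((TensorProduct.map (Coalgebra.comul (R := R)) (LinearMap.id : H →ₗ[R] H)) ∘ₗ δ) := by
        rw [hδ.coflat_mul]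
    _ = TensorProduct.map (conv' φ ψ) LinearMap.id ∘ₗ δ := by
        rw [show TensorProduct.map (conv' φ ψ) (LinearMap.id : H →ₗ[R] H)
            = TensorProduct.map (LinearMap.mul' R H ∘ₗ TensorProduct.map φ ψ) LinearMap.id
              ∘ₗ TensorProduct.map Coalgebra.comul LinearMap.id from
          by rw [← TensorProduct.map_comp, LinearMap.comp_id]; rfl]
        rfl

lemma comodLHS_eq_conv' (φ ψ : C →ₗ[R] H) :
    TensorProduct.map ψ LinearMap.id ∘ₗ comodCondLHS R C H δ φ
      = conv' (TensorProduct.map ψ LinearMap.id ∘ₗ δ) (iota2 ∘ₗ φ) := by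
  unfold comodCondLHS conv' iota2
  have e : TensorProduct.map (TensorProduct.map ψ LinearMap.id ∘ₗ δ)
        ((Algebra.TensorProduct.includeRight (R := R) (A := H) (B := H)).toLinearMap ∘ₗ φ)
      = (TensorProduct.map (TensorProduct.map ψ LinearMap.id)
            (Algebra.TensorProduct.includeRight (R := R) (A := H) (B := H)).toLinearMap)
          ∘ₗ TensorProduct.map δ φ := TensorProduct.map_comp _ _ _ _
  rw [e]
  have key : (TensorProduct.map ψ (LinearMap.id : H →ₗ[R] H))
        ∘ₗ (TensorProduct.map (LinearMap.id : C →ₗ[R] C) (LinearMap.mul' R H))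
        ∘ₗ (TensorProduct.assoc R C H H).toLinearMap
      = LinearMap.mul' R (H ⊗[R] H)
          ∘ₗ (TensorProduct.map (TensorProduct.map ψ LinearMap.id)
            (Algebra.TensorProduct.includeRight (R := R) (A := H) (B := H)).toLinearMap) :=
    TensorProduct.ext_threefold fun x y z => by
      simp [Algebra.TensorProduct.tmul_mul_tmul]
  exact congrArg (· ∘ₗ (TensorProduct.map δ φ ∘ₗ Coalgebra.comul)) key

lemma comodRHS_eq_conv' (φ ψ : C →ₗ[R] H) :
    TensorProduct.map ψ LinearMap.id ∘ₗ comodCondRHS R C H δ φ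
      = conv' (iota2 ∘ₗ φ) (TensorProduct.map ψ LinearMap.id ∘ₗ δ) := by
  unfold comodCondRHS conv' iota2
  have e : TensorProduct.map
        ((Algebra.TensorProduct.includeRight (R := R) (A := H) (B := H)).toLinearMap ∘ₗ φ)
        (TensorProduct.map ψ LinearMap.id ∘ₗ δ)
      = (TensorProduct.map
            (Algebra.TensorProduct.includeRight (R := R) (A := H) (B := H)).toLinearMap
            (TensorProduct.map ψ LinearMap.id))
          ∘ₗ TensorProduct.map φ δ := TensorProduct.map_comp _ _ _ _
  rw [e]
  have key : (TensorProduct.map ψ (LinearMap.id : H →ₗ[R] H))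
        ∘ₗ (TensorProduct.map (LinearMap.id : C →ₗ[R] C) (LinearMap.mul' R H))
        ∘ₗ (TensorProduct.assoc R C H H).toLinearMap
        ∘ₗ (TensorProduct.map ((TensorProduct.comm R H C).toLinearMap)
            (LinearMap.id : H →ₗ[R] H))
        ∘ₗ (TensorProduct.assoc R H C H).symm.toLinearMap
      = LinearMap.mul' R (H ⊗[R] H)
          ∘ₗ (TensorProduct.map
            (Algebra.TensorProduct.includeRight (R := R) (A := H) (B := H)).toLinearMap
            (TensorProduct.map ψ LinearMap.id)) := by
    apply TensorProduct.ext'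
    intro x y
    induction y using TensorProduct.induction_on with
    | zero => simp
    | tmul c h => simp [Algebra.TensorProduct.tmul_mul_tmul]
    | add u v hu hv => simp only [TensorProduct.tmul_add, map_add, hu, hv]
  exact congrArg (· ∘ₗ (TensorProduct.map φ δ ∘ₗ Coalgebra.comul)) key

/-- right action of `Hom(C,H)` on `Hom(C, C ⊗ H)` -/
noncomputable def actR (k : C →ₗ[R] C ⊗[R] H) (g : C →ₗ[R] H) : C →ₗ[R] C ⊗[R] H :=
  ((TensorProduct.map (LinearMap.id : C →ₗ[R] C) (LinearMap.mul' R H))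
    ∘ₗ (TensorProduct.assoc R C H H).toLinearMap
    ∘ₗ TensorProduct.map k g) ∘ₗ Coalgebra.comul

/-- left action of `Hom(C,H)` on `Hom(C, C ⊗ H)` -/
noncomputable def actL (g : C →ₗ[R] H) (k : C →ₗ[R] C ⊗[R] H) : C →ₗ[R] C ⊗[R] H :=
  ((TensorProduct.map (LinearMap.id : C →ₗ[R] C) (LinearMap.mul' R H))
    ∘ₗ (TensorProduct.assoc R C H H).toLinearMap
    ∘ₗ (TensorProduct.map ((TensorProduct.comm R H C).toLinearMap)
        (LinearMap.id : H →ₗ[R] H))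
    ∘ₗ (TensorProduct.assoc R H C H).symm.toLinearMap
    ∘ₗ TensorProduct.map g k) ∘ₗ Coalgebra.comul

lemma comodCondLHS_eq_actR (φ : C →ₗ[R] H) : comodCondLHS R C H δ φ = actR δ φ := rfl

lemma comodCondRHS_eq_actL (φ : C →ₗ[R] H) : comodCondRHS R C H δ φ = actL φ δ := rfl

lemma actR_actR (k : C →ₗ[R] C ⊗[R] H) (g h : C →ₗ[R] H) :
    actR (actR k g) h = actR k (conv' g h) := by
  unfold actR conv'
  rw [factor_l, factor_r]
  exact coassoc_ext
    ((TensorProduct.map (LinearMap.id : C →ₗ[R] C) (LinearMap.mul' R H))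
      ∘ₗ (TensorProduct.assoc R C H H).toLinearMap
      ∘ₗ TensorProduct.map
        ((TensorProduct.map (LinearMap.id : C →ₗ[R] C) (LinearMap.mul' R H))
          ∘ₗ (TensorProduct.assoc R C H H).toLinearMap ∘ₗ TensorProduct.map k g) h)
    ((TensorProduct.map (LinearMap.id : C →ₗ[R] C) (LinearMap.mul' R H))
      ∘ₗ (TensorProduct.assoc R C H H).toLinearMap
      ∘ₗ TensorProduct.map k (LinearMap.mul' R H ∘ₗ TensorProduct.map g h))
    (fun x y z => by
      simp only [LinearMap.coe_comp, Function.comp_apply, TensorProduct.map_tmul,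
        LinearMap.mul'_apply, LinearMap.id_coe, id_eq, LinearEquiv.coe_coe]
      induction k x using TensorProduct.induction_on with
      | zero => simp
      | tmul c a => simp [mul_assoc]
      | add u v hu hv => simp only [TensorProduct.add_tmul, map_add, hu, hv])

lemma actR_actL (k : C →ₗ[R] C ⊗[R] H) (g h : C →ₗ[R] H) :
    actR (actL g k) h = actL g (actR k h) := by
  unfold actR actL
  rw [factor_l, factor_r]
  exact coassoc_ext
    ((TensorProduct.map (LinearMap.id : C →ₗ[R] C) (LinearMap.mul' R H))
      ∘ₗ (TensorProduct.assoc R C H H).toLinearMap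
      ∘ₗ TensorProduct.map
        (((TensorProduct.map (LinearMap.id : C →ₗ[R] C) (LinearMap.mul' R H))
      ∘ₗ (TensorProduct.assoc R C H H).toLinearMap
      ∘ₗ (TensorProduct.map ((TensorProduct.comm R H C).toLinearMap)
          (LinearMap.id : H →ₗ[R] H))
      ∘ₗ (TensorProduct.assoc R H C H).symm.toLinearMap) ∘ₗ TensorProduct.map g k) h)
    (((TensorProduct.map (LinearMap.id : C →ₗ[R] C) (LinearMap.mul' R H))
      ∘ₗ (TensorProduct.assoc R C H H).toLinearMap
      ∘ₗ (TensorProduct.map ((TensorProduct.comm R H C).toLinearMap)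
          (LinearMap.id : H →ₗ[R] H))
      ∘ₗ (TensorProduct.assoc R H C H).symm.toLinearMap)
      ∘ₗ TensorProduct.map g
        ((TensorProduct.map (LinearMap.id : C →ₗ[R] C) (LinearMap.mul' R H))
          ∘ₗ (TensorProduct.assoc R C H H).toLinearMap ∘ₗ TensorProduct.map k h))
    (fun x y z => by
      simp only [LinearMap.coe_comp, Function.comp_apply, TensorProduct.map_tmul,
        LinearMap.mul'_apply, LinearMap.id_coe, id_eq, LinearEquiv.coe_coe]
      induction k y using TensorProduct.induction_on with
      | zero => simp
      | tmul c a => simp [mul_assoc]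
      | add u v hu hv => simp only [TensorProduct.add_tmul, TensorProduct.tmul_add, map_add,
          hu, hv])

lemma actL_actL (k : C →ₗ[R] C ⊗[R] H) (g h : C →ₗ[R] H) :
    actL (conv' g h) k = actL g (actL h k) := by
  unfold actL conv'
  rw [factor_l, factor_r]
  exact coassoc_ext
    (((TensorProduct.map (LinearMap.id : C →ₗ[R] C) (LinearMap.mul' R H))
      ∘ₗ (TensorProduct.assoc R C H H).toLinearMap
      ∘ₗ (TensorProduct.map ((TensorProduct.comm R H C).toLinearMap)
          (LinearMap.id : H →ₗ[R] H))
      ∘ₗ (TensorProduct.assoc R H C H).symm.toLinearMap)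
      ∘ₗ TensorProduct.map (LinearMap.mul' R H ∘ₗ TensorProduct.map g h) k)
    (((TensorProduct.map (LinearMap.id : C →ₗ[R] C) (LinearMap.mul' R H))
      ∘ₗ (TensorProduct.assoc R C H H).toLinearMap
      ∘ₗ (TensorProduct.map ((TensorProduct.comm R H C).toLinearMap)
          (LinearMap.id : H →ₗ[R] H))
      ∘ₗ (TensorProduct.assoc R H C H).symm.toLinearMap)
      ∘ₗ TensorProduct.map g
        (((TensorProduct.map (LinearMap.id : C →ₗ[R] C) (LinearMap.mul' R H))
      ∘ₗ (TensorProduct.assoc R C H H).toLinearMap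
      ∘ₗ (TensorProduct.map ((TensorProduct.comm R H C).toLinearMap)
          (LinearMap.id : H →ₗ[R] H))
      ∘ₗ (TensorProduct.assoc R H C H).symm.toLinearMap) ∘ₗ TensorProduct.map h k))
    (fun x y z => by
      simp only [LinearMap.coe_comp, Function.comp_apply, TensorProduct.map_tmul,
        LinearMap.mul'_apply, LinearMap.id_coe, id_eq, LinearEquiv.coe_coe]
      induction k z using TensorProduct.induction_on with
      | zero => simp
      | tmul c a => simp [mul_assoc]
      | add u v hu hv => simp only [TensorProduct.add_tmul, TensorProduct.tmul_add, map_add,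
          hu, hv])

end DeltaAux

/-- the `H`-equivariant cocharacters are closed under convolution. -/


theorem isCocharacter_conv (R C H : Type) [CommRing R]
    [AddCommGroup C] [Module R C] [Coalgebra R C] [Ring H] [HopfAlgebra R H]
    (δ : C →ₗ[R] C ⊗[R] H) (hδ : IsCoflatCoaction R C H δ)
    (φ ψ : C →ₗ[R] H) (hφ : IsCocharacter R C H δ φ) (hψ : IsCocharacter R C H δ ψ) :
    IsCocharacter R C H δ (conv R C H φ ψ) := by
  have hconv : conv R C H = conv' := rfl
  have hone : convOne R C H = convOne' := rfl
  constructor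
  · -- invertibility
    obtain ⟨φ', h1, h2⟩ := hφ.invertible
    obtain ⟨ψ', h3, h4⟩ := hψ.invertible
    rw [hconv, hone] at h1 h2 h3 h4
    refine ⟨conv R C H ψ' φ', ?_, ?_⟩
    · rw [hconv, hone]
      rw [conv'_assoc, ← conv'_assoc ψ ψ' φ', h3, one_conv', h1]
    · rw [hconv, hone]
      rw [conv'_assoc, ← conv'_assoc φ' φ ψ, h2, one_conv', h4]
  · -- counitarity
    have hε : (Coalgebra.counit (R := R) (A := H))
        = (Bialgebra.counitAlgHom R H).toLinearMap := rfl
    have hc : (Coalgebra.counit : C →ₗ[R] R) = convOne' (R := R) (C := C) (A := R) := by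
      unfold convOne'
      ext c
      simp
    rw [hconv, hε, algHom_conv', ← hε, hφ.counitary, hψ.counitary, hc, one_conv']
  · -- coaction
    have hΔ : (Coalgebra.comul (R := R) (A := H))
        = (Bialgebra.comulAlgHom R H).toLinearMap := rfl
    have hι : ∀ f g : C →ₗ[R] H, iota2 ∘ₗ conv' f g = conv' (iota2 ∘ₗ f) (iota2 ∘ₗ g) :=
      fun f g => algHom_conv' (Algebra.TensorProduct.includeRight (R := R) (A := H) (B := H)) f g
    have hswap : conv' (TensorProduct.map ψ LinearMap.id ∘ₗ δ) (iota2 ∘ₗ φ)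
        = conv' (iota2 ∘ₗ φ) (TensorProduct.map ψ LinearMap.id ∘ₗ δ) := by
      rw [← comodLHS_eq_conv', ← comodRHS_eq_conv', hφ.comodule]
    rw [hconv, hΔ, algHom_conv', ← hΔ, hφ.coaction, hψ.coaction,
      coactTerm_eq_conv' δ φ φ, coactTerm_eq_conv' δ ψ ψ,
      coactTerm_eq_conv' δ (conv' φ ψ) (conv' φ ψ),
      ← beta_conv' δ hδ φ ψ, hι]
    rw [conv'_assoc, ← conv'_assoc (iota2 ∘ₗ φ) (TensorProduct.map ψ LinearMap.id ∘ₗ δ),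
      ← hswap, conv'_assoc (TensorProduct.map ψ LinearMap.id ∘ₗ δ) (iota2 ∘ₗ φ),
      ← conv'_assoc (TensorProduct.map φ LinearMap.id ∘ₗ δ)]
  · -- comodule condition
    have hφm : actR δ φ = actL φ δ := hφ.comodule
    have hψm : actR δ ψ = actL ψ δ := hψ.comodule
    rw [hconv, comodCondLHS_eq_actR, comodCondRHS_eq_actL,
      ← actR_actR, hφm, actR_actL, hψm, ← actL_actL]
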